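/- arXiv:1506.00821 — 3 statements merged into one kernel-verified Lean document; each statement's English description precedes it below -/
import Mathlib

section
/- With the setup of the joint prediction-update weights, the map (L, J, θ) ↦ θ̃ (where L ⊆ I, J ⊆ 𝔹, θ an association map on L ∪ J, and θ̃ extends θ by assigning |Z|+1 on (I \ L) ∪ (𝔹 \ J)) is a bijection onto the set of extended association maps on I ∪ 𝔹, and for each such triple ω_{k−1} · ω_S(L) · ω_B(J) · [η_Z^{(θ)}]^{L∪J} = ω_{k−1} · [γ^{(θ̃(·))}]^{I∪𝔹}. -/
/-!
A label of `I ∪ B` is either detected, with a measurement index in `{0, …, M}`, or missed, with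
the value `M + 1`. Hence an extended association map on `I ∪ B` is the same thing as a detected
set `T ⊆ I ∪ B` together with an association map on `T`; and since `I` and `B` are disjoint, `T`
splits uniquely as `L ∪ J` with `L = T ∩ I` the survivors and `J = T ∩ B` the births. Under this
correspondence the joint weight factorises label by label: a label of `I` contributes `ηS · ηZ`
or `1 - ηS`, a label of `B` contributes `r · ηZ` or `1 - r`, which regroups into the two-stage
prediction-update weight.
-/

/-- An association map on the label set `S`, with `M` measurements:
labels in `S` are assigned values in `{0,…,M}`, injectively on positive values;
labels outside `S` are normalized to `0`. -/
def AssocOn {ι : Type*} (S : Finset ι) (M : ℕ) (θ : ι → ℕ) : Prop :=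
  (∀ ℓ ∈ S, θ ℓ ≤ M) ∧ (∀ ℓ ∉ S, θ ℓ = 0) ∧
    ∀ ℓ ∈ S, ∀ ℓ' ∈ S, θ ℓ = θ ℓ' → θ ℓ ≠ 0 → ℓ = ℓ'

/-- An extended association map on the label set `S`: values in `{0,…,M+1}`,
injective on values in `{1,…,M}`; labels outside `S` normalized to `0`. -/
def ExtAssocOn {ι : Type*} (S : Finset ι) (M : ℕ) (θ : ι → ℕ) : Prop :=
  (∀ ℓ ∈ S, θ ℓ ≤ M + 1) ∧ (∀ ℓ ∉ S, θ ℓ = 0) ∧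
    ∀ ℓ ∈ S, ∀ ℓ' ∈ S, θ ℓ = θ ℓ' → θ ℓ ≠ 0 → θ ℓ ≠ M + 1 → ℓ = ℓ'

section

open Finset

variable {ι : Type*} [DecidableEq ι]

section Extension

variable {S T : Finset ι} {M : ℕ} {θ τ : ι → ℕ}

/-- The paper's `θ̃`: labels of `S` outside `T` get the missed-detection value `M + 1`. -/
def extendAssoc (S T : Finset ι) (M : ℕ) (θ : ι → ℕ) : ι → ℕ :=
  fun ℓ => if ℓ ∈ S \ T then M + 1 else θ ℓ

def detectedLabels (S : Finset ι) (M : ℕ) (τ : ι → ℕ) : Finset ι :=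
  S.filter (τ · ≠ M + 1)

def restrictAssoc (M : ℕ) (τ : ι → ℕ) : ι → ℕ :=
  fun ℓ => if τ ℓ = M + 1 then 0 else τ ℓ

lemma AssocOn.ne_succ (h : AssocOn T M θ) (ℓ : ι) : θ ℓ ≠ M + 1 := by
  by_cases hℓ : ℓ ∈ T
  · have := h.1 ℓ hℓ
    omega
  · simp [h.2.1 ℓ hℓ]

lemma AssocOn.extAssocOn_extendAssoc (hT : T ⊆ S) (h : AssocOn T M θ) :
    ExtAssocOn S M (extendAssoc S T M θ) := by
  have hne := h.ne_succ
  obtain ⟨hle, hout, hinj⟩ := h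
  refine ⟨fun ℓ hℓ => ?_, fun ℓ hℓ => ?_, fun ℓ hℓ ℓ' hℓ' heq h0 hM => ?_⟩
  · by_cases hT' : ℓ ∈ T
    · simp [extendAssoc, hT', (hle ℓ hT').trans (Nat.le_succ M)]
    · simp [extendAssoc, hℓ, hT']
  · simp [extendAssoc, hℓ, hout ℓ (fun h => hℓ (hT h))]
  · by_cases hT₁ : ℓ ∈ T
    · by_cases hT₂ : ℓ' ∈ T
      · simp only [extendAssoc, mem_sdiff, hT₁, hT₂, not_true_eq_false, and_false,
          if_false] at heq h0
        exact hinj ℓ hT₁ ℓ' hT₂ heq h0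
      · simp [extendAssoc, hT₁, hT₂, hℓ', hne ℓ] at heq
    · simp [extendAssoc, hℓ, hT₁] at hM

lemma ExtAssocOn.assocOn_restrictAssoc (h : ExtAssocOn S M τ) :
    AssocOn (detectedLabels S M τ) M (restrictAssoc M τ) := by
  obtain ⟨hle, hout, hinj⟩ := h
  refine ⟨fun ℓ hℓ => ?_, fun ℓ hℓ => ?_, fun ℓ hℓ ℓ' hℓ' heq h0 => ?_⟩
  · rw [detectedLabels, mem_filter] at hℓ
    have := hle ℓ hℓ.1
    simp only [restrictAssoc, hℓ.2, if_false]
    omega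
  · by_cases hS : ℓ ∈ S
    · simp_all [detectedLabels, restrictAssoc]
    · simp [restrictAssoc, hout ℓ hS]
  · rw [detectedLabels, mem_filter] at hℓ hℓ'
    simp only [restrictAssoc, hℓ.2, hℓ'.2, if_false] at heq h0
    exact hinj ℓ hℓ.1 ℓ' hℓ'.1 heq h0 hℓ.2

lemma detectedLabels_extendAssoc (hT : T ⊆ S) (h : AssocOn T M θ) :
    detectedLabels S M (extendAssoc S T M θ) = T := by
  ext ℓ
  by_cases hℓ : ℓ ∈ T
  · simp [detectedLabels, extendAssoc, hℓ, hT hℓ, h.ne_succ ℓ]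
  · simp +contextual [detectedLabels, extendAssoc, hℓ]

lemma restrictAssoc_extendAssoc (h : AssocOn T M θ) :
    restrictAssoc M (extendAssoc S T M θ) = θ := by
  funext ℓ
  by_cases hℓ : ℓ ∈ S \ T
  · simp [restrictAssoc, extendAssoc, hℓ, h.2.1 ℓ (mem_sdiff.mp hℓ).2]
  · simp [restrictAssoc, extendAssoc, hℓ, h.ne_succ ℓ]

lemma extendAssoc_restrictAssoc (h : ExtAssocOn S M τ) :
    extendAssoc S (detectedLabels S M τ) M (restrictAssoc M τ) = τ := by
  funext ℓ
  by_cases hS : ℓ ∈ S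
  · by_cases hτ : τ ℓ = M + 1 <;> simp [extendAssoc, detectedLabels, restrictAssoc, hS, hτ]
  · simp [extendAssoc, restrictAssoc, hS, h.2.1 ℓ hS]

theorem bijOn_extendAssoc (S : Finset ι) (M : ℕ) :
    Set.BijOn (fun q : Finset ι × (ι → ℕ) => extendAssoc S q.1 M q.2)
      {q | q.1 ⊆ S ∧ AssocOn q.1 M q.2} {τ | ExtAssocOn S M τ} := by
  refine Set.InvOn.bijOn (f' := fun τ => (detectedLabels S M τ, restrictAssoc M τ))
    ⟨fun q ⟨hT, h⟩ => ?_, fun τ h => extendAssoc_restrictAssoc h⟩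
    (fun q ⟨hT, h⟩ => h.extAssocOn_extendAssoc hT)
    (fun τ h => ⟨filter_subset _ _, ExtAssocOn.assocOn_restrictAssoc h⟩)
  exact Prod.ext (detectedLabels_extendAssoc hT h) (restrictAssoc_extendAssoc h)

end Extension

section DisjointUnion

variable {I B L J : Finset ι}

lemma union_inter_left_eq_of_disjoint (hdisj : Disjoint I B) (hL : L ⊆ I) (hJ : J ⊆ B) :
    (L ∪ J) ∩ I = L := by
  rw [union_inter_distrib_right, inter_eq_left.mpr hL,
    disjoint_iff_inter_eq_empty.mp (hdisj.symm.mono_left hJ), union_empty]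

lemma union_inter_right_eq_of_disjoint (hdisj : Disjoint I B) (hL : L ⊆ I) (hJ : J ⊆ B) :
    (L ∪ J) ∩ B = J := by
  rw [union_comm]
  exact union_inter_left_eq_of_disjoint hdisj.symm hJ hL

lemma union_sdiff_union_of_disjoint (hdisj : Disjoint I B) (hL : L ⊆ I) (hJ : J ⊆ B) :
    (I ∪ B) \ (L ∪ J) = (I \ L) ∪ (B \ J) := by
  ext ℓ
  have hIB : ℓ ∈ I → ℓ ∉ B := fun h => disjoint_left.mp hdisj h
  have hL' := @hL ℓ
  have hJ' := @hJ ℓ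
  simp only [mem_union, mem_sdiff]
  tauto

theorem bijOn_union_of_disjoint {α : Type*} (hdisj : Disjoint I B) (P : Finset ι → α → Prop) :
    Set.BijOn (fun p : Finset ι × Finset ι × α => (p.1 ∪ p.2.1, p.2.2))
      {p | p.1 ⊆ I ∧ p.2.1 ⊆ B ∧ P (p.1 ∪ p.2.1) p.2.2} {q | q.1 ⊆ I ∪ B ∧ P q.1 q.2} := by
  refine ⟨fun p ⟨hL, hJ, hP⟩ => ⟨union_subset_union hL hJ, hP⟩, ?_, ?_⟩
  · rintro ⟨L, J, a⟩ ⟨hL, hJ, -⟩ ⟨L', J', a'⟩ ⟨hL', hJ', -⟩ h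
    simp only [Prod.mk.injEq] at h ⊢
    obtain ⟨hLJ, rfl⟩ := h
    dsimp only at hL hJ hL' hJ'
    refine ⟨?_, ?_, rfl⟩
    · rw [← union_inter_left_eq_of_disjoint hdisj hL hJ, hLJ,
        union_inter_left_eq_of_disjoint hdisj hL' hJ']
    · rw [← union_inter_right_eq_of_disjoint hdisj hL hJ, hLJ,
        union_inter_right_eq_of_disjoint hdisj hL' hJ']
  · rintro ⟨T, a⟩ ⟨hT, hP⟩
    have hsplit : T ∩ I ∪ T ∩ B = T := by rw [← inter_union_distrib_left, inter_eq_left.mpr hT]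
    refine ⟨(T ∩ I, T ∩ B, a), ⟨inter_subset_right, inter_subset_right, ?_⟩, Prod.ext hsplit rfl⟩
    show P (T ∩ I ∪ T ∩ B) a
    rwa [hsplit]

end DisjointUnion

lemma prod_ite_mem_of_subset {β : Type*} [CommMonoid β] {L I : Finset ι} (hL : L ⊆ I)
    (f g : ι → β) :
    ∏ ℓ ∈ I, (if ℓ ∈ L then f ℓ else g ℓ) = (∏ ℓ ∈ L, f ℓ) * ∏ ℓ ∈ I \ L, g ℓ := by
  simpa only [piecewise, inter_eq_right.mpr hL] using prod_piecewise I L f g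

lemma prod_survival_birth_weight {I B L J : Finset ι} (hdisj : Disjoint I B) (hL : L ⊆ I)
    (hJ : J ⊆ B) {M : ℕ} {θ : ι → ℕ} (hθ : ∀ ℓ, θ ℓ ≠ M + 1) (ηS r : ι → ℝ)
    (ηZ : ι → ℕ → ℝ) :
    ∏ ℓ ∈ I ∪ B,
        (if (if ℓ ∈ (I \ L) ∪ (B \ J) then M + 1 else θ ℓ) = M + 1 then
           (if ℓ ∈ I then 1 - ηS ℓ else 1 - r ℓ)
         else (if ℓ ∈ I then ηS ℓ * ηZ ℓ (θ ℓ) else r ℓ * ηZ ℓ (θ ℓ)))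
      = (∏ ℓ ∈ L, ηS ℓ) * (∏ ℓ ∈ I \ L, (1 - ηS ℓ)) * (∏ ℓ ∈ J, r ℓ) *
          (∏ ℓ ∈ B \ J, (1 - r ℓ)) * (∏ ℓ ∈ L ∪ J, ηZ ℓ (θ ℓ)) := by
  calc _ = (∏ ℓ ∈ I, if ℓ ∈ L then ηS ℓ * ηZ ℓ (θ ℓ) else 1 - ηS ℓ) *
          ∏ ℓ ∈ B, if ℓ ∈ J then r ℓ * ηZ ℓ (θ ℓ) else 1 - r ℓ := by
        rw [prod_union hdisj]
        congr 1 <;> refine prod_congr rfl fun ℓ hℓ => ?_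
        · have hB : ℓ ∉ B := disjoint_left.mp hdisj hℓ
          by_cases hLℓ : ℓ ∈ L <;> simp [hℓ, hB, hLℓ, hθ ℓ]
        · have hI : ℓ ∉ I := disjoint_right.mp hdisj hℓ
          by_cases hJℓ : ℓ ∈ J <;> simp [hℓ, hI, hJℓ, hθ ℓ]
    _ = _ := by
        rw [prod_ite_mem_of_subset hL, prod_ite_mem_of_subset hJ,
          prod_union (hdisj.mono hL hJ), prod_mul_distrib, prod_mul_distrib]
        ring

end

theorem stmt8 {ι : Type*} [DecidableEq ι] (I B : Finset ι) (hdisj : Disjoint I B) (M : ℕ)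
    (ηS r : ι → ℝ) (ηZ : ι → ℕ → ℝ) (ωprev : ℝ) :
    Set.BijOn
      (fun p : Finset ι × Finset ι × (ι → ℕ) =>
        fun ℓ => if ℓ ∈ (I \ p.1) ∪ (B \ p.2.1) then M + 1 else p.2.2 ℓ)
      {p | p.1 ⊆ I ∧ p.2.1 ⊆ B ∧ AssocOn (p.1 ∪ p.2.1) M p.2.2}
      {θ | ExtAssocOn (I ∪ B) M θ}
    ∧ ∀ p : Finset ι × Finset ι × (ι → ℕ),
        p.1 ⊆ I → p.2.1 ⊆ B → AssocOn (p.1 ∪ p.2.1) M p.2.2 →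
        ωprev * ((∏ ℓ ∈ p.1, ηS ℓ) * (∏ ℓ ∈ I \ p.1, (1 - ηS ℓ)) *
            (∏ ℓ ∈ p.2.1, r ℓ) * (∏ ℓ ∈ B \ p.2.1, (1 - r ℓ)) *
            (∏ ℓ ∈ p.1 ∪ p.2.1, ηZ ℓ (p.2.2 ℓ)))
          = ωprev * ∏ ℓ ∈ I ∪ B,
              (if (if ℓ ∈ (I \ p.1) ∪ (B \ p.2.1) then M + 1 else p.2.2 ℓ) = M + 1 then
                 (if ℓ ∈ I then 1 - ηS ℓ else 1 - r ℓ)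
               else (if ℓ ∈ I then ηS ℓ * ηZ ℓ (p.2.2 ℓ) else r ℓ * ηZ ℓ (p.2.2 ℓ))) := by
  refine ⟨?_, fun p hL hJ hθ => ?_⟩
  · refine ((bijOn_extendAssoc (I ∪ B) M).comp
      (bijOn_union_of_disjoint hdisj fun T θ => AssocOn T M θ)).congr ?_
    rintro p ⟨hL, hJ, -⟩
    show extendAssoc (I ∪ B) (p.1 ∪ p.2.1) M p.2.2 = _
    unfold extendAssoc
    rw [union_sdiff_union_of_disjoint hdisj hL hJ]
  · rw [prod_survival_birth_weight hdisj hL hJ hθ.ne_succ]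
end

section
/- The set of valid extended associations θ̃ ∈ {0,…,M+1}^P (injective on values in {1,…,M}) is in bijection with the set of P × (M+2P) 0-1 matrices S such that every row of S sums to 1, every column sums to at most 1, and S(n,m) = 1 with m > M implies m = M+n or m = M+P+n. -/
/-- A valid (vector of) extended associations: no two distinct coordinates
take the same value in `{1,…,M}`. -/
def ValidGA (P M : ℕ) (θ : Fin P → Fin (M + 2)) : Prop :=
  ∀ i j, i ≠ j → 1 ≤ (θ i : ℕ) → (θ i : ℕ) ≤ M → θ i ≠ θ j

/-- The (0-indexed) column selected by track `n` under the extended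
association `θ`: columns `0,…,M-1` are measurements, column `M+n`
encodes a missed detection of track `n`, column `M+P+n` encodes
non-existence of track `n`. -/
def colOf (P M : ℕ) (θ : Fin P → Fin (M + 2)) (n : Fin P) : ℕ :=
  if 1 ≤ (θ n : ℕ) ∧ (θ n : ℕ) ≤ M then (θ n : ℕ) - 1
  else if (θ n : ℕ) = 0 then M + (n : ℕ) else M + P + (n : ℕ)

lemma colOf_lt (P M : ℕ) (θ : Fin P → Fin (M + 2)) (n : Fin P) :
    colOf P M θ n < M + 2 * P := by
  have hn := n.isLt
  unfold colOf
  split_ifs <;> omega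

lemma colOf_inj (P M : ℕ) (θ : Fin P → Fin (M + 2)) (hθ : ValidGA P M θ)
    {i j : Fin P} (h : colOf P M θ i = colOf P M θ j) : i = j := by
  by_contra hij
  have hi := i.isLt
  have hj := j.isLt
  have hvi := (θ i).isLt
  have hvj := (θ j).isLt
  unfold colOf at h
  split_ifs at h with h1 h2 h3 h3 h4 <;>
    first
      | omega
      | exact hij (Fin.val_injective (by omega))
      | exact hθ i j hij h1.1 h1.2 (Fin.val_injective (by omega))

/-- Reconstruct an association from the selected columns. -/
def recoverθ (P M : ℕ) (f : Fin P → Fin (M + 2 * P)) : Fin P → Fin (M + 2) :=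
  fun n => if h : (f n : ℕ) < M then ⟨(f n : ℕ) + 1, by omega⟩
    else if (f n : ℕ) < M + P then ⟨0, by omega⟩ else ⟨M + 1, by omega⟩

lemma recoverθ_val (P M : ℕ) (f : Fin P → Fin (M + 2 * P)) (n : Fin P) :
    ((f n : ℕ) < M ∧ (recoverθ P M f n : ℕ) = (f n : ℕ) + 1) ∨
    ((M ≤ (f n : ℕ) ∧ (f n : ℕ) < M + P) ∧ (recoverθ P M f n : ℕ) = 0) ∨
    (M + P ≤ (f n : ℕ) ∧ (recoverθ P M f n : ℕ) = M + 1) := by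
  unfold recoverθ
  split_ifs with h1 h2
  · exact Or.inl ⟨h1, rfl⟩
  · exact Or.inr (Or.inl ⟨⟨by omega, h2⟩, rfl⟩)
  · exact Or.inr (Or.inr ⟨by omega, rfl⟩)

theorem stmt11 (P M : ℕ) :
    Set.BijOn
      (fun θ : Fin P → Fin (M + 2) =>
        (fun n m => if (m : ℕ) = colOf P M θ n then (1 : ℝ) else 0 :
          Matrix (Fin P) (Fin (M + 2 * P)) ℝ))
      {θ | ValidGA P M θ}
      {S : Matrix (Fin P) (Fin (M + 2 * P)) ℝ |
        (∀ n m, S n m = 0 ∨ S n m = 1) ∧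
        (∀ n, ∑ m, S n m = 1) ∧
        (∀ m, ∑ n, S n m ≤ 1) ∧
        (∀ n m, S n m = 1 → M ≤ (m : ℕ) → ((m : ℕ) = M + n ∨ (m : ℕ) = M + P + n))} := by
  refine ⟨?_, ?_, ?_⟩
  · -- MapsTo
    intro θ hθ
    refine ⟨?_, ?_, ?_, ?_⟩
    · intro n m
      by_cases h : (m : ℕ) = colOf P M θ n <;> simp [h]
    · intro n
      have hlt := colOf_lt P M θ n
      rw [Finset.sum_eq_single (⟨colOf P M θ n, hlt⟩ : Fin (M + 2 * P))]
      · simp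
      · intro m _ hm
        simp only [ite_eq_right_iff]
        intro he
        exact absurd (Fin.val_injective (he.trans rfl) : m = ⟨colOf P M θ n, hlt⟩) hm
      · simp
    · intro m
      rw [Finset.sum_boole]
      have hc : (Finset.univ.filter fun n => (m : ℕ) = colOf P M θ n).card ≤ 1 := by
        rw [Finset.card_le_one]
        intro a ha b hb
        simp only [Finset.mem_filter] at ha hb
        exact colOf_inj P M θ hθ (ha.2.symm.trans hb.2)
      exact_mod_cast hc
    · intro n m hm hMm
      by_cases h : (m : ℕ) = colOf P M θ n
      · have hn := n.isLt
        unfold colOf at h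
        split_ifs at h with h1 h2 <;> omega
      · simp [h] at hm
  · -- InjOn
    intro θ hθ θ' hθ' heq
    funext n
    have hlt := colOf_lt P M θ n
    have hc : colOf P M θ n = colOf P M θ' n := by
      have h1 := congrFun (congrFun heq n) (⟨colOf P M θ n, hlt⟩ : Fin (M + 2 * P))
      simp only at h1
      by_contra hne
      simp [hne] at h1
    have h2 := (θ n).isLt
    have h2' := (θ' n).isLt
    have hn := n.isLt
    unfold colOf at hc
    split_ifs at hc <;> exact Fin.val_injective (by omega)
  · -- SurjOn
    intro S hS
    obtain ⟨h01, hrow, hcol, hend⟩ := hS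
    have hex : ∀ n, ∃ m, S n m = 1 := by
      intro n
      by_contra hcon
      push_neg at hcon
      have hz : ∀ m, S n m = 0 := fun m => (h01 n m).resolve_right (hcon m)
      have h0 : ∑ m, S n m = 0 := Finset.sum_eq_zero fun m _ => hz m
      rw [hrow n] at h0
      exact one_ne_zero h0
    choose f hf using hex
    have hnonneg : ∀ n m, (0 : ℝ) ≤ S n m := by
      intro n m
      rcases h01 n m with h | h <;> simp [h]
    have huniq : ∀ n m, S n m = 1 → m = f n := by
      intro n m hm
      by_contra hne
      have hp : ∑ m' ∈ ({m, f n} : Finset _), S n m' = 2 := by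
        rw [Finset.sum_pair hne, hm, hf n]; norm_num
      have hle : ∑ m' ∈ ({m, f n} : Finset _), S n m' ≤ ∑ m', S n m' :=
        Finset.sum_le_sum_of_subset_of_nonneg (Finset.subset_univ _)
          (fun i _ _ => hnonneg n i)
      rw [hrow n, hp] at hle
      linarith
    have hcol2 : ∀ (i j : Fin P) (m : Fin (M + 2 * P)),
        i ≠ j → S i m = 1 → S j m = 1 → False := by
      intro i j m hij hi hj
      have hp : ∑ n ∈ ({i, j} : Finset _), S n m = 2 := by
        rw [Finset.sum_pair hij, hi, hj]; norm_num
      have hle : ∑ n ∈ ({i, j} : Finset _), S n m ≤ ∑ n, S n m :=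
        Finset.sum_le_sum_of_subset_of_nonneg (Finset.subset_univ _)
          (fun i _ _ => hnonneg i m)
      have := hcol m
      rw [hp] at hle
      linarith
    refine ⟨recoverθ P M f, ?_, ?_⟩
    · -- ValidGA
      intro i j hij ha hb hthe
      rcases recoverθ_val P M f i with hi | hi | hi <;>
        rcases recoverθ_val P M f j with hjj | hjj | hjj <;>
          first
            | omega
            | (exact hcol2 i j (f i) hij (hf i)
                (by
                  have : f j = f i := Fin.val_injective (by
                    have hth : (recoverθ P M f i : ℕ) = (recoverθ P M f j : ℕ) := by
                      rw [hthe]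
                    omega)
                  rw [← this]; exact hf j))
    · -- maps to S
      have hcolf : ∀ n, colOf P M (recoverθ P M f) n = (f n : ℕ) := by
        intro n
        have hflt := (f n).isLt
        rcases recoverθ_val P M f n with h | h | h
        · unfold colOf
          rw [h.2, if_pos ⟨by omega, by omega⟩]
          omega
        · have hor := hend n (f n) (hf n) h.1.1
          unfold colOf
          rw [h.2, if_neg (by omega), if_pos rfl]
          omega
        · have hor := hend n (f n) (hf n) (by omega)
          unfold colOf
          rw [h.2]
          have h1 : ¬(1 ≤ M + 1 ∧ M + 1 ≤ M) := by omega
          have h2 : ¬(M + 1 = 0) := by omega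
          rw [if_neg h1, if_neg h2]
          have hn := n.isLt
          omega
      funext n m
      simp only
      rw [hcolf n]
      by_cases hm : m = f n
      · subst hm
        simp [hf n]
      · have hv : (m : ℕ) ≠ (f n : ℕ) := fun h => hm (Fin.val_injective h)
        rcases h01 n m with h | h
        · simp [hv, h]
        · exact absurd (huniq n m h) hm
end

section
/- Let π(θ̃) ∝ 1_valid(θ̃) ∏_{n=1}^P γ_n(θ̃_n) on {0,…,M+1}^P with all γ_n strictly positive on {0,…,M+1}. Then from any valid state, any other valid state is reachable with positive probability in at most P systematic-scan Gibbs sweeps (in particular, the Gibbs chain restricted to valid states is irreducible). -/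
/-!
A systematic-scan sweep moves from `θ` to `θ'` with positive probability as soon as every
intermediate state (the first `k` coordinates taken from `θ'`, the others from `θ`) has positive
weight, since each coordinate update then lands on a positive-weight state. Replacing coordinates
by `0` never creates a collision, so one sweep goes from `θ` to the all-zeros state and a second one
from there to `θ'`. When `P = 1` there is nothing to collide and a single sweep suffices.
-/

section NonnegMatrix

variable {R : Type*} [Semiring R] [PartialOrder R] [IsStrictOrderedRing R]

theorem Matrix.mul_apply_nonneg {l m n : Type*} [Fintype m] {A : Matrix l m R}
    {B : Matrix m n R} (hA : ∀ i j, 0 ≤ A i j) (hB : ∀ i j, 0 ≤ B i j) (i : l) (j : n) :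
    0 ≤ (A * B) i j :=
  Finset.sum_nonneg fun x _ => mul_nonneg (hA i x) (hB x j)

theorem Matrix.mul_apply_pos {l m n : Type*} [Fintype m] {A : Matrix l m R} {B : Matrix m n R}
    (hA : ∀ i j, 0 ≤ A i j) (hB : ∀ i j, 0 ≤ B i j) {i : l} {k : m} {j : n}
    (hik : 0 < A i k) (hkj : 0 < B k j) : 0 < (A * B) i j :=
  Finset.sum_pos' (fun x _ => mul_nonneg (hA i x) (hB x j)) ⟨k, Finset.mem_univ _, mul_pos hik hkj⟩

variable {S : Type*} [Fintype S] [DecidableEq S]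

theorem Matrix.list_ofFn_prod_apply_nonneg {n : ℕ} (A : Fin n → Matrix S S R)
    (hA : ∀ k i j, 0 ≤ A k i j) : ∀ i j, 0 ≤ (List.ofFn A).prod i j := by
  induction n with
  | zero =>
    intro i j
    rw [List.ofFn_zero, List.prod_nil, Matrix.one_apply]
    split_ifs
    exacts [zero_le_one, le_rfl]
  | succ n ih =>
    rw [List.ofFn_succ, List.prod_cons]
    exact Matrix.mul_apply_nonneg (hA 0) (ih _ fun k => hA k.succ)

theorem Matrix.list_ofFn_prod_apply_pos_of_path {n : ℕ} (A : Fin n → Matrix S S R)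
    (hA : ∀ k i j, 0 ≤ A k i j) (f : Fin (n + 1) → S)
    (hf : ∀ k, 0 < A k (f k.castSucc) (f k.succ)) :
    0 < (List.ofFn A).prod (f 0) (f (Fin.last n)) := by
  induction n with
  | zero => simp
  | succ n ih =>
    rw [List.ofFn_succ, List.prod_cons, ← Fin.succ_last]
    exact Matrix.mul_apply_pos (hA 0) (Matrix.list_ofFn_prod_apply_nonneg _ fun k => hA k.succ)
      (hf 0) (ih _ (fun k => hA k.succ) (f ∘ Fin.succ) fun k => hf k.succ)

end NonnegMatrix

section Gibbs

variable {α : Type*} [Fintype α] [DecidableEq α]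

section Kernel

variable {ι : Type*} [Fintype ι] [DecidableEq ι]

/-- Resampling coordinate `n` from the conditional law of the unnormalised weight `w`. -/
noncomputable def gibbsKernel (w : (ι → α) → ℝ) (n : ι) : Matrix (ι → α) (ι → α) ℝ :=
  fun θ θ' => if ∀ i, i ≠ n → θ' i = θ i then w θ' / ∑ m, w (Function.update θ n m) else 0

variable {w : (ι → α) → ℝ}

theorem gibbsKernel_nonneg (hw : ∀ θ, 0 ≤ w θ) (n : ι) (θ θ' : ι → α) :
    0 ≤ gibbsKernel w n θ θ' := by
  unfold gibbsKernel
  split_ifs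
  exacts [div_nonneg (hw θ') (Finset.sum_nonneg fun m _ => hw _), le_rfl]

theorem gibbsKernel_pos (hw : ∀ θ, 0 ≤ w θ) {n : ι} {θ θ' : ι → α}
    (hθθ' : ∀ i, i ≠ n → θ' i = θ i) (hθ' : 0 < w θ') : 0 < gibbsKernel w n θ θ' := by
  have hupdate : Function.update θ n (θ' n) = θ' :=
    Function.update_eq_iff.mpr ⟨rfl, fun i hi => (hθθ' i hi).symm⟩
  rw [gibbsKernel, if_pos hθθ']
  refine div_pos hθ' (Finset.sum_pos' (fun m _ => hw _) ⟨θ' n, Finset.mem_univ _, ?_⟩)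
  rwa [hupdate]

end Kernel

variable {P : ℕ} {w : (Fin P → α) → ℝ}

/-- Matrices act on row vectors here, so coordinate `0` is updated first. -/
noncomputable def gibbsSweep (w : (Fin P → α) → ℝ) : Matrix (Fin P → α) (Fin P → α) ℝ :=
  (List.ofFn (gibbsKernel w)).prod

def interpolate (θ θ' : Fin P → α) (k : ℕ) : Fin P → α :=
  fun i => if (i : ℕ) < k then θ' i else θ i

theorem gibbsSweep_nonneg (hw : ∀ θ, 0 ≤ w θ) (θ θ' : Fin P → α) : 0 ≤ gibbsSweep w θ θ' :=
  Matrix.list_ofFn_prod_apply_nonneg _ (gibbsKernel_nonneg hw) θ θ'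

theorem gibbsSweep_pos_of_interpolate (hw : ∀ θ, 0 ≤ w θ) {θ θ' : Fin P → α}
    (hpos : ∀ k, 0 < w (interpolate θ θ' k)) : 0 < gibbsSweep w θ θ' := by
  have hstart : interpolate θ θ' 0 = θ := funext fun i => if_neg (Nat.not_lt_zero _)
  have hend : interpolate θ θ' P = θ' := funext fun i => if_pos i.isLt
  have hstep (k : Fin P) (i : Fin P) (hik : i ≠ k) :
      interpolate θ θ' (k + 1) i = interpolate θ θ' k i := by
    have : (i : ℕ) < k + 1 ↔ (i : ℕ) < k := by have := Fin.val_ne_of_ne hik; omega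
    simp only [interpolate, this]
  have := Matrix.list_ofFn_prod_apply_pos_of_path _ (gibbsKernel_nonneg hw)
    (fun k : Fin (P + 1) => interpolate θ θ' k) fun k => gibbsKernel_pos hw (hstep k) (hpos _)
  unfold gibbsSweep
  simpa [hstart, hend] using this

end Gibbs

section Validity

variable {P M : ℕ}

theorem validGA_of_le_one (hP : P ≤ 1) (θ : Fin P → Fin (M + 2)) : ValidGA P M θ :=
  fun i j hij => absurd (Fin.ext (by omega)) hij

theorem ValidGA.of_forall_eq_or_eq_zero {θ η : Fin P → Fin (M + 2)} (hθ : ValidGA P M θ)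
    (hη : ∀ i, η i = θ i ∨ η i = 0) : ValidGA P M η := by
  intro i j hij h1 hM
  rcases hη i with hi | hi
  · rw [hi] at h1 hM ⊢
    rcases hη j with hj | hj
    · rw [hj]
      exact hθ i j hij h1 hM
    · rw [hj]
      intro h0
      simp [h0] at h1
  · rw [hi] at h1
    simp at h1

theorem ValidGA.interpolate_zero_left {θ : Fin P → Fin (M + 2)} (hθ : ValidGA P M θ) (k : ℕ) :
    ValidGA P M (interpolate 0 θ k) :=
  hθ.of_forall_eq_or_eq_zero fun i => by unfold interpolate; split_ifs <;> simp

theorem ValidGA.interpolate_zero_right {θ : Fin P → Fin (M + 2)} (hθ : ValidGA P M θ) (k : ℕ) :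
    ValidGA P M (interpolate θ 0 k) :=
  hθ.of_forall_eq_or_eq_zero fun i => by unfold interpolate; split_ifs <;> simp

end Validity

open Classical in
theorem stmt17 (P M : ℕ) (hP : 0 < P) (γ : Fin P → ℕ → ℝ) (hγ : ∀ n m, 0 < γ n m)
    (w : (Fin P → Fin (M + 2)) → ℝ)
    (hw : ∀ θ, w θ = if ValidGA P M θ then ∏ i, γ i (θ i : ℕ) else 0)
    (K : Fin P → Matrix (Fin P → Fin (M + 2)) (Fin P → Fin (M + 2)) ℝ)
    (hK : ∀ n θ θ', K n θ θ' =
      if ∀ i, i ≠ n → θ' i = θ i then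
        w θ' / ∑ m : Fin (M + 2), w (Function.update θ n m)
      else 0) :
    ∀ θ θ', ValidGA P M θ → ValidGA P M θ' →
      ∃ t, 1 ≤ t ∧ t ≤ P ∧ 0 < ((List.ofFn K).prod ^ t) θ θ' := by
  intro θ θ' hθ hθ'
  have hw0 (η) : 0 ≤ w η := by
    rw [hw]
    split_ifs
    exacts [Finset.prod_nonneg fun i _ => (hγ i _).le, le_rfl]
  have hwpos (η) (hη : ValidGA P M η) : 0 < w η := by
    rw [hw, if_pos hη]
    exact Finset.prod_pos fun i _ => hγ i _
  have hsweep : (List.ofFn K).prod = gibbsSweep w := by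
    rw [gibbsSweep]
    congr
    ext n η η'
    rw [hK, gibbsKernel]
    congr
  have hpath {η η'} (h : ∀ k, ValidGA P M (interpolate η η' k)) : 0 < gibbsSweep w η η' :=
    gibbsSweep_pos_of_interpolate hw0 fun k => hwpos _ (h k)
  rw [hsweep]
  rcases Nat.lt_or_ge P 2 with hP1 | hP2
  · refine ⟨1, le_rfl, hP, ?_⟩
    rw [pow_one]
    exact hpath fun k => validGA_of_le_one (by omega : P ≤ 1) _
  · refine ⟨2, by omega, hP2, ?_⟩
    rw [sq]
    exact Matrix.mul_apply_pos (gibbsSweep_nonneg hw0) (gibbsSweep_nonneg hw0)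
      (hpath hθ.interpolate_zero_right) (hpath hθ'.interpolate_zero_left)
end
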